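/- Let w : ℤ → ℝ≥0 be a weight and M the Hardy-Littlewood maximal operator on ℤ. Then for every sequence a : ℤ → ℝ, ‖Ma‖_{ℓ^∞_w(ℤ)} ≤ ‖a‖_{ℓ^∞_{Mw}(ℤ)}, where ‖b‖_{ℓ^∞_v} = inf{C ≥ 0 : v({n : |b(n)| > C}) = 0} and v(S) = ∑_{k∈S} v(k). -/

import Mathlib

open scoped ENNReal BigOperators NNReal

/-- Average of `|a|` over a finite set of integers, valued in `ℝ≥0∞`. -/
noncomputable def eavg (a : ℤ → ℝ) (I : Finset ℤ) : ℝ≥0∞ :=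
  (∑ n ∈ I, ENNReal.ofReal |a n|) / (I.card : ℝ≥0∞)

/-- Uncentered Hardy–Littlewood maximal operator over finite intervals of ℤ. -/
noncomputable def Mhl (a : ℤ → ℝ) (m : ℤ) : ℝ≥0∞ :=
  ⨆ (i : ℤ) (j : ℤ) (_ : m ∈ Finset.Icc i j), eavg a (Finset.Icc i j)

/-- Weighted `ℓ^∞` "norm" of an `ℝ≥0∞`-valued sequence `b` with respect to an
`ℝ≥0∞`-valued weight `v`: the infimum of constants `C` such that the weight of
`{n : b n > C}` vanishes. -/
noncomputable def wLinftyNorm (v : ℤ → ℝ≥0∞) (b : ℤ → ℝ≥0∞) : ℝ≥0∞ :=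
  sInf {C : ℝ≥0∞ | (∑' n : {n : ℤ | C < b n}, v n) = 0}

/-!
If `Ma(m) > C`, some interval `I ∋ m` has average of `|a|` above `C`, so it contains a point `n`
with `|a(n)| > C`. When `C` is admissible for `‖a‖_{ℓ^∞_{Mw}}`, this forces `Mw(n) = 0`; since `Mw(n)`
dominates the average of `w` over `I`, the weight `w` vanishes on all of `I`, in particular at `m`.
So every admissible constant for the right-hand side is admissible for the left-hand side.
-/

lemma tsum_subtype_lt_eq_zero_iff {α : Type*} (v b : α → ℝ≥0∞) (C : ℝ≥0∞) :
    (∑' n : {n | C < b n}, v n) = 0 ↔ ∀ n, C < b n → v n = 0 := by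
  simp only [ENNReal.tsum_eq_zero, Subtype.forall, Set.mem_ofPred_eq]

lemma wLinftyNorm_le_wLinftyNorm {v v' b b' : ℤ → ℝ≥0∞}
    (h : ∀ C, (∀ n, C < b' n → v' n = 0) → ∀ n, C < b n → v n = 0) :
    wLinftyNorm v b ≤ wLinftyNorm v' b' := by
  refine le_sInf fun C hC => sInf_le ?_
  rw [Set.mem_ofPred_eq, tsum_subtype_lt_eq_zero_iff] at hC ⊢
  exact h C hC

lemma exists_lt_of_lt_eavg {a : ℤ → ℝ} {I : Finset ℤ} {C : ℝ≥0∞} (h : C < eavg a I) :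
    ∃ n ∈ I, C < ENNReal.ofReal |a n| := by
  by_contra! hle
  refine h.not_ge (ENNReal.div_le_of_le_mul ?_)
  calc ∑ n ∈ I, ENNReal.ofReal |a n| ≤ I.card • C := Finset.sum_le_card_nsmul _ _ _ hle
    _ = C * I.card := by rw [nsmul_eq_mul, mul_comm]

lemma eq_zero_of_eavg_eq_zero {a : ℤ → ℝ} {I : Finset ℤ} {m : ℤ} (h : eavg a I = 0)
    (hm : m ∈ I) : a m = 0 := by
  rw [eavg, ENNReal.div_eq_zero_iff] at h
  rcases h with hsum | hcard
  · simpa using Finset.sum_eq_zero_iff.mp hsum m hm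
  · exact absurd hcard (ENNReal.natCast_ne_top _)

lemma eavg_le_Mhl (a : ℤ → ℝ) {i j n : ℤ} (hn : n ∈ Finset.Icc i j) :
    eavg a (Finset.Icc i j) ≤ Mhl a n :=
  le_iSup_of_le i (le_iSup_of_le j (le_iSup_of_le hn le_rfl))

lemma exists_lt_eavg_of_lt_Mhl {a : ℤ → ℝ} {m : ℤ} {C : ℝ≥0∞} (h : C < Mhl a m) :
    ∃ i j, m ∈ Finset.Icc i j ∧ C < eavg a (Finset.Icc i j) := by
  simpa only [Mhl, lt_iSup_iff, exists_prop] using h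

/-- `‖Ma‖_{ℓ^∞_w(ℤ)} ≤ ‖a‖_{ℓ^∞_{Mw}(ℤ)}`. -/
theorem wLinfty_maximal_bound (w : ℤ → ℝ≥0) (a : ℤ → ℝ) :
    wLinftyNorm (fun n => (w n : ℝ≥0∞)) (Mhl a) ≤
      wLinftyNorm (fun n => Mhl (fun k => (w k : ℝ)) n)
        (fun n => ENNReal.ofReal |a n|) := by
  refine wLinftyNorm_le_wLinftyNorm fun C hC m hm => ?_
  obtain ⟨i, j, hmI, hCI⟩ := exists_lt_eavg_of_lt_Mhl hm
  obtain ⟨n, hnI, hCn⟩ := exists_lt_of_lt_eavg hCI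
  have hw : eavg (fun k => (w k : ℝ)) (Finset.Icc i j) = 0 :=
    le_zero_iff.mp (hC n hCn ▸ eavg_le_Mhl _ hnI)
  simpa using eq_zero_of_eavg_eq_zero hw hmI
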